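/- arXiv:2503.15723 — 3 statements merged into one kernel-verified Lean document; each statement's English description precedes it below -/
import Mathlib

section
/- For any graph H and any step t ∈ {0,1,…,M−1} of the onion decomposition, given J^(t), the maximal element J^(t+1) of argmax{ ρ(J | J^(t)) : J ⊆ H, J ⊋ J^(t) } is unique; consequently, every graph H has a unique onion decomposition. -/
open Filter
open scoped ENNReal

noncomputable section

/-- The edge set of the complete graph `K_n` on the vertex set `Fin n`
(the non-diagonal elements of `Sym2 (Fin n)`). -/
def edgeFinset (n : ℕ) : Finset (Sym2 (Fin n)) :=
  Finset.univ.filter fun e => ¬ e.IsDiag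

open Classical in
/-- The vertex set `V(J)` of a graph `J` identified with its edge set:
the vertices incident to at least one edge of `J`. -/
def vertexSet {n : ℕ} (J : Finset (Sym2 (Fin n))) : Finset (Fin n) :=
  Finset.univ.filter fun v => ∃ e ∈ J, v ∈ e

/-- The graph-cut density `ρ(J|S) = |J \ S| / |V(J) \ V(S)|`, with the
convention that it equals `+∞` when `V(J) \ V(S) = ∅` (in particular when
`V(J) = V(S)`). -/
def rho {n : ℕ} (J S : Finset (Sym2 (Fin n))) : ℝ≥0∞ :=
  if vertexSet J \ vertexSet S = ∅ then ⊤
  else ((J \ S).card : ℝ≥0∞) / (((vertexSet J \ vertexSet S).card : ℝ≥0∞))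

/-- The quantity `n ^ (−|V(J)\V(S)| / |J\S|)` (real exponentiation). -/
def phiTerm (n : ℕ) (J S : Finset (Sym2 (Fin n))) : ℝ :=
  (n : ℝ) ^ (-(((vertexSet J \ vertexSet S).card : ℝ) / (((J \ S).card : ℝ))))

/-- The `q`-modified subgraph expectation threshold
`φ_q = min { max { n^(−|V(J)\V(S)|/|J\S|) : S ⊊ J ⊆ H } : S ⊆ H, |S| ≤ q·|H| }`. -/
def phi (n : ℕ) (H : Finset (Sym2 (Fin n))) (q : ℝ) : ℝ :=
  sInf {x : ℝ | ∃ S : Finset (Sym2 (Fin n)), S ⊆ H ∧ (S.card : ℝ) ≤ q * (H.card : ℝ) ∧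
    x = sSup {y : ℝ | ∃ J : Finset (Sym2 (Fin n)), S ⊂ J ∧ J ⊆ H ∧ y = phiTerm n J S}}

/-- The planted copy `H* = σ(H)` of `H` under the vertex permutation `σ`. -/
def plantedCopy {n : ℕ} (H : Finset (Sym2 (Fin n))) (σ : Equiv.Perm (Fin n)) :
    Finset (Sym2 (Fin n)) :=
  H.image (Sym2.map ⇑σ)

/-- The Bayes risk (unnormalized mean squared error) of the estimator `f` in the planted
subgraph model: the planted copy `H* = σ(H)` is drawn via a uniform permutation `σ`, the
noise `G₀ ~ G(n,p)` includes each edge of `K_n` independently with probability `p`, and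
the observation is `G = H* ∪ G₀`. -/
def risk (n : ℕ) (H : Finset (Sym2 (Fin n))) (p : ℝ)
    (f : Finset (Sym2 (Fin n)) → Sym2 (Fin n) → ℝ) : ℝ :=
  ∑ σ : Equiv.Perm (Fin n), ∑ G₀ ∈ (edgeFinset n).powerset,
    ((n.factorial : ℝ))⁻¹ * p ^ G₀.card * (1 - p) ^ ((edgeFinset n).card - G₀.card) *
      ∑ e ∈ edgeFinset n,
        ((if e ∈ plantedCopy H σ then (1 : ℝ) else 0) - f (plantedCopy H σ ∪ G₀) e) ^ 2

/-- The normalized minimum mean squared error `MMSE_n(p)` of the planted subgraph model: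
the infimum over all estimators of the Bayes risk, normalized by the number of edges of `H`. -/
def MMSE (n : ℕ) (H : Finset (Sym2 (Fin n))) (p : ℝ) : ℝ :=
  ((H.card : ℝ))⁻¹ * sInf (Set.range (risk n H p))

/-- A sequence of graphs `H = H_n` is weakly dense if
`|H_n| / (v(H_n)·log v(H_n)) → ∞`, i.e. its liminf is `+∞`. -/
def WeaklyDense (H : (n : ℕ) → Finset (Sym2 (Fin n))) : Prop :=
  Tendsto (fun n => ((H n).card : ℝ) /
      (((vertexSet (H n)).card : ℝ) * Real.log ((vertexSet (H n)).card : ℝ)))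
    atTop atTop

/-- `J 0 = ∅ ⊊ J 1 ⊊ ⋯ ⊊ J M = H` is the onion decomposition of `H`: at each step,
`J (t+1)` is a maximal element of `argmax { ρ(J' | J t) : J t ⊊ J' ⊆ H }`. -/
def IsOnionDecomp (n : ℕ) (H : Finset (Sym2 (Fin n))) (M : ℕ)
    (J : ℕ → Finset (Sym2 (Fin n))) : Prop :=
  J 0 = ∅ ∧ J M = H ∧
  ∀ t, t < M →
    J t ⊂ J (t + 1) ∧ J (t + 1) ⊆ H ∧
    (∀ J', J t ⊂ J' → J' ⊆ H → rho J' (J t) ≤ rho (J (t + 1)) (J t)) ∧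
    (∀ J', J t ⊂ J' → J' ⊆ H → rho (J (t + 1)) (J t) ≤ rho J' (J t) → ¬ J (t + 1) ⊂ J')


lemma vertexSet_mono {n : ℕ} {J K : Finset (Sym2 (Fin n))} (h : J ⊆ K) :
    vertexSet J ⊆ vertexSet K := by
  classical
  intro v hv
  simp only [vertexSet, Finset.mem_filter, Finset.mem_univ, true_and] at hv ⊢
  obtain ⟨e, he, hve⟩ := hv
  exact ⟨e, h he, hve⟩

lemma vertexSet_union {n : ℕ} (J K : Finset (Sym2 (Fin n))) :
    vertexSet (J ∪ K) = vertexSet J ∪ vertexSet K := by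
  classical
  ext v
  simp only [vertexSet, Finset.mem_filter, Finset.mem_univ, true_and, Finset.mem_union]
  constructor
  · rintro ⟨e, he, hve⟩
    rcases he with h | h
    · exact Or.inl ⟨e, h, hve⟩
    · exact Or.inr ⟨e, h, hve⟩
  · rintro (⟨e, he, hve⟩ | ⟨e, he, hve⟩)
    · exact ⟨e, Or.inl he, hve⟩
    · exact ⟨e, Or.inr he, hve⟩

lemma rho_ne_top {n : ℕ} {J S : Finset (Sym2 (Fin n))}
    (h : vertexSet J \ vertexSet S ≠ ∅) : rho J S ≠ ⊤ := by
  rw [rho, if_neg h]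
  rw [Ne, ENNReal.div_eq_top]
  push_neg
  constructor
  · intro _
    simpa [Finset.card_eq_zero] using h
  · intro h'
    exact absurd h' (ENNReal.natCast_ne_top _)

lemma cross_le {a b c d : ℕ} (hb : b ≠ 0) (hd : d ≠ 0) :
    ((a : ℝ≥0∞) / b ≤ (c : ℝ≥0∞) / d) ↔ a * d ≤ c * b := by
  rw [ENNReal.div_le_iff (by exact_mod_cast hb) (ENNReal.natCast_ne_top _),
    mul_comm, ← mul_div_assoc, ENNReal.le_div_iff_mul_le
      (Or.inl (by exact_mod_cast hd)) (Or.inl (ENNReal.natCast_ne_top _))]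
  rw [mul_comm c b]
  exact_mod_cast Iff.rfl

lemma inter_sdiff_eq' {n : ℕ} (s t u : Finset (Sym2 (Fin n))) :
    (s \ u) ∩ (t \ u) = (s ∩ t) \ u := by
  ext x
  simp only [Finset.mem_inter, Finset.mem_sdiff]
  tauto

lemma inter_sdiff_eq'' {n : ℕ} (s t u : Finset (Fin n)) :
    (s \ u) ∩ (t \ u) = (s ∩ t) \ u := by
  ext x
  simp only [Finset.mem_inter, Finset.mem_sdiff]
  tauto

lemma rho_union {n : ℕ} {A J₁ J₂ H : Finset (Sym2 (Fin n))}
    (hA1 : A ⊂ J₁) (hA2 : A ⊂ J₂) (h1H : J₁ ⊆ H) (h2H : J₂ ⊆ H)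
    (hmax : ∀ J', A ⊂ J' → J' ⊆ H → rho J' A ≤ rho J₁ A)
    (h21 : rho J₂ A = rho J₁ A) :
    rho (J₁ ∪ J₂) A = rho J₁ A := by
  classical
  refine le_antisymm (hmax _ (lt_of_lt_of_le hA1 Finset.subset_union_left)
    (Finset.union_subset h1H h2H)) ?_
  by_cases h1 : vertexSet J₁ \ vertexSet A = ∅
  · have hr1 : rho J₁ A = ⊤ := by rw [rho, if_pos h1]
    have h2 : vertexSet J₂ \ vertexSet A = ∅ := by
      by_contra h2
      exact rho_ne_top h2 (h21.trans hr1)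
    have hu : vertexSet (J₁ ∪ J₂) \ vertexSet A = ∅ := by
      rw [vertexSet_union, Finset.union_sdiff_distrib, h1, h2, Finset.union_empty]
    have hru : rho (J₁ ∪ J₂) A = ⊤ := by rw [rho, if_pos hu]
    rw [hru, hr1]
  · have hr1top : rho J₁ A ≠ ⊤ := rho_ne_top h1
    have h2 : vertexSet J₂ \ vertexSet A ≠ ∅ := by
      intro h2
      exact hr1top (h21.symm.trans (by rw [rho, if_pos h2]))
    have hu : vertexSet (J₁ ∪ J₂) \ vertexSet A ≠ ∅ := by
      intro hu
      rw [vertexSet_union, Finset.union_sdiff_distrib, Finset.union_eq_empty] at hu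
      exact h1 hu.1
    -- notation
    set a1 := (J₁ \ A).card with ha1
    set a2 := (J₂ \ A).card with ha2
    set b1 := (vertexSet J₁ \ vertexSet A).card with hb1
    set b2 := (vertexSet J₂ \ vertexSet A).card with hb2
    set a := ((J₁ ∪ J₂) \ A).card with ha
    set b := (vertexSet (J₁ ∪ J₂) \ vertexSet A).card with hb
    set c := ((J₁ ∩ J₂) \ A).card with hc
    set d := ((vertexSet J₁ ∩ vertexSet J₂) \ vertexSet A).card with hd
    have hb1ne : b1 ≠ 0 := by simpa [hb1, Finset.card_eq_zero] using h1
    have hb2ne : b2 ≠ 0 := by simpa [hb2, Finset.card_eq_zero] using h2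
    have hbne : b ≠ 0 := by simpa [hb, Finset.card_eq_zero] using hu
    have hr1 : rho J₁ A = (a1 : ℝ≥0∞) / b1 := by rw [rho, if_neg h1]
    have hr2 : rho J₂ A = (a2 : ℝ≥0∞) / b2 := by rw [rho, if_neg h2]
    -- cross equality
    have hx : a1 * b2 = a2 * b1 := by
      have h12 : rho J₁ A ≤ rho J₂ A := le_of_eq h21.symm
      have h21' : rho J₂ A ≤ rho J₁ A := le_of_eq h21
      rw [hr1, hr2, cross_le hb1ne hb2ne] at h12
      rw [hr1, hr2, cross_le hb2ne hb1ne] at h21'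
      exact le_antisymm h12 (by linarith)
    -- cardinality identities
    have hacard : a + c = a1 + a2 := by
      rw [ha, hc, ha1, ha2, Finset.union_sdiff_distrib, ← inter_sdiff_eq']
      exact Finset.card_union_add_card_inter _ _
    have hbcard : b + d = b1 + b2 := by
      rw [hb, hd, hb1, hb2, vertexSet_union, Finset.union_sdiff_distrib, ← inter_sdiff_eq'']
      exact Finset.card_union_add_card_inter _ _
    -- intersection density bound
    have hcd : c * b1 ≤ a1 * d := by
      rcases Nat.eq_zero_or_pos c with hc0 | hcpos
      · rw [hc0, zero_mul]; exact Nat.zero_le _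
      · have hAI : A ⊂ J₁ ∩ J₂ := by
          refine Finset.ssubset_iff_of_subset
            (Finset.subset_inter hA1.subset hA2.subset) |>.2 ?_
          have : ((J₁ ∩ J₂) \ A).Nonempty := Finset.card_pos.1 hcpos
          obtain ⟨x, hx⟩ := this
          rw [Finset.mem_sdiff] at hx
          exact ⟨x, hx.1, hx.2⟩
        have hImax : rho (J₁ ∩ J₂) A ≤ rho J₁ A :=
          hmax _ hAI (Finset.inter_subset_left.trans h1H)
        have hInt : vertexSet (J₁ ∩ J₂) \ vertexSet A ≠ ∅ := by
          intro hIe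
          rw [rho, if_pos hIe] at hImax
          exact hr1top (top_le_iff.1 hImax)
        set d' := (vertexSet (J₁ ∩ J₂) \ vertexSet A).card with hd'
        have hd'ne : d' ≠ 0 := by simpa [hd', Finset.card_eq_zero] using hInt
        have hcI : ((J₁ ∩ J₂) \ A).card = c := rfl
        rw [rho, if_neg hInt, hr1, hcI, cross_le hd'ne hb1ne] at hImax
        have hdd : d' ≤ d := by
          apply Finset.card_le_card
          apply Finset.sdiff_subset_sdiff _ (le_refl _)
          exact Finset.subset_inter (vertexSet_mono Finset.inter_subset_left)
            (vertexSet_mono Finset.inter_subset_right)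
        calc c * b1 ≤ a1 * d' := hImax
          _ ≤ a1 * d := Nat.mul_le_mul_left _ hdd
    -- combine
    have key : a1 * b ≤ a * b1 := by
      have e1 : a1 * b + a1 * d = a * b1 + c * b1 := by
        have : a1 * (b + d) = (a + c) * b1 := by
          rw [hbcard, hacard, Nat.mul_add, Nat.add_mul, hx]
        calc a1 * b + a1 * d = a1 * (b + d) := by ring
          _ = (a + c) * b1 := this
          _ = a * b1 + c * b1 := by ring
      omega
    have hru : rho (J₁ ∪ J₂) A = (a : ℝ≥0∞) / b := by rw [rho, if_neg hu]
    rw [hru, hr1, cross_le hb1ne hbne]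
    exact key

lemma argmax_exists_unique {n : ℕ} {H A : Finset (Sym2 (Fin n))} (hAH : A ⊂ H) :
    ∃! J : Finset (Sym2 (Fin n)),
      (A ⊂ J ∧ J ⊆ H ∧ ∀ J', A ⊂ J' → J' ⊆ H → rho J' A ≤ rho J A) ∧
      (∀ J', A ⊂ J' → J' ⊆ H → rho J A ≤ rho J' A → ¬ J ⊂ J') := by
  classical
  -- uniqueness of any two witnesses
  have uniq2 : ∀ J₁ J₂ : Finset (Sym2 (Fin n)),
      ((A ⊂ J₁ ∧ J₁ ⊆ H ∧ ∀ J', A ⊂ J' → J' ⊆ H → rho J' A ≤ rho J₁ A) ∧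
        (∀ J', A ⊂ J' → J' ⊆ H → rho J₁ A ≤ rho J' A → ¬ J₁ ⊂ J')) →
      ((A ⊂ J₂ ∧ J₂ ⊆ H ∧ ∀ J', A ⊂ J' → J' ⊆ H → rho J' A ≤ rho J₂ A) ∧
        (∀ J', A ⊂ J' → J' ⊆ H → rho J₂ A ≤ rho J' A → ¬ J₂ ⊂ J')) →
      J₂ ⊆ J₁ := by
    rintro J₁ J₂ ⟨⟨h1A, h1H, h1max⟩, h1M⟩ ⟨⟨h2A, h2H, h2max⟩, h2M⟩
    have h21 : rho J₂ A = rho J₁ A :=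
      le_antisymm (h1max _ h2A h2H) (h2max _ h1A h1H)
    have hU : rho (J₁ ∪ J₂) A = rho J₁ A := rho_union h1A h2A h1H h2H h1max h21
    have hAU : A ⊂ J₁ ∪ J₂ := lt_of_lt_of_le h1A Finset.subset_union_left
    have hUH : J₁ ∪ J₂ ⊆ H := Finset.union_subset h1H h2H
    have hnot : ¬ J₁ ⊂ J₁ ∪ J₂ := h1M _ hAU hUH (le_of_eq hU.symm)
    have heq : J₁ ∪ J₂ = J₁ := by
      by_contra hne
      exact hnot (Finset.ssubset_iff_subset_ne.2 ⟨Finset.subset_union_left, fun h => hne h.symm⟩)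
    exact heq ▸ Finset.subset_union_right
  -- existence
  have hcandne : A ⊂ H ∧ H ⊆ H := ⟨hAH, le_refl _⟩
  set cand : Finset (Finset (Sym2 (Fin n))) :=
    H.powerset.filter (fun J => A ⊂ J) with hcand
  have hmemc : ∀ J, J ∈ cand ↔ (J ⊆ H ∧ A ⊂ J) := by
    intro J
    simp [hcand, Finset.mem_powerset]
  have hHc : H ∈ cand := (hmemc H).2 ⟨le_refl _, hAH⟩
  obtain ⟨Jstar, hJsmem, hJsmax⟩ :=
    Finset.exists_max_image cand (fun J => rho J A) ⟨H, hHc⟩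
  obtain ⟨hJsH, hAJs⟩ := (hmemc Jstar).1 hJsmem
  have hmax' : ∀ J', A ⊂ J' → J' ⊆ H → rho J' A ≤ rho Jstar A := by
    intro J' h1 h2
    exact hJsmax J' ((hmemc J').2 ⟨h2, h1⟩)
  set T : Finset (Finset (Sym2 (Fin n))) :=
    cand.filter (fun J => rho J A = rho Jstar A) with hT
  have hmemT : ∀ J, J ∈ T ↔ ((J ⊆ H ∧ A ⊂ J) ∧ rho J A = rho Jstar A) := by
    intro J
    simp [hT, hmemc J, Finset.mem_filter, and_assoc]
  have hJsT : Jstar ∈ T := (hmemT Jstar).2 ⟨⟨hJsH, hAJs⟩, rfl⟩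
  have hTne : T.Nonempty := ⟨Jstar, hJsT⟩
  set U : Finset (Sym2 (Fin n)) := T.sup' hTne id with hU
  have hPU : (A ⊂ U ∧ U ⊆ H) ∧ rho U A = rho Jstar A := by
    rw [hU]
    refine Finset.sup'_induction (p := fun X => (A ⊂ X ∧ X ⊆ H) ∧ rho X A = rho Jstar A)
      hTne id ?_ ?_
    · rintro X ⟨⟨hAX, hXH⟩, hrX⟩ Y ⟨⟨hAY, hYH⟩, hrY⟩
      have hmaxX : ∀ J', A ⊂ J' → J' ⊆ H → rho J' A ≤ rho X A := by
        intro J' h1 h2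
        rw [hrX]
        exact hmax' J' h1 h2
      have h21 : rho Y A = rho X A := hrY.trans hrX.symm
      have := rho_union hAX hAY hXH hYH hmaxX h21
      rw [Finset.sup_eq_union]
      exact ⟨⟨lt_of_lt_of_le hAX Finset.subset_union_left,
        Finset.union_subset hXH hYH⟩, this.trans hrX⟩
    · intro J hJ
      obtain ⟨⟨hJH, hAJ⟩, hr⟩ := (hmemT J).1 hJ
      exact ⟨⟨hAJ, hJH⟩, hr⟩
  obtain ⟨⟨hAU, hUH⟩, hrU⟩ := hPU
  have hUprop : (A ⊂ U ∧ U ⊆ H ∧ ∀ J', A ⊂ J' → J' ⊆ H → rho J' A ≤ rho U A) ∧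
      (∀ J', A ⊂ J' → J' ⊆ H → rho U A ≤ rho J' A → ¬ U ⊂ J') := by
    refine ⟨⟨hAU, hUH, ?_⟩, ?_⟩
    · intro J' h1 h2
      rw [hrU]
      exact hmax' J' h1 h2
    · intro J' h1 h2 h3 hc
      have hr' : rho J' A = rho Jstar A :=
        le_antisymm (hmax' J' h1 h2) (le_of_le_of_eq (hrU ▸ h3 : rho Jstar A ≤ rho J' A) rfl)
      have hJ'T : J' ∈ T := (hmemT J').2 ⟨⟨h2, h1⟩, hr'⟩
      have : J' ⊆ U := Finset.le_sup' id hJ'T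
      exact hc.2 this
  refine ⟨U, hUprop, ?_⟩
  intro Y hY
  exact Finset.Subset.antisymm (uniq2 U Y hUprop hY) (uniq2 Y U hY hUprop)

/-- For any graph `H` and any step of the onion decomposition:
given the current layer `A = J^(t) ⊊ H`, the maximal element of
`argmax { ρ(J | A) : A ⊊ J ⊆ H }` is unique; consequently, every graph `H` has a
unique onion decomposition. -/
theorem onion_decomposition_unique
    (n : ℕ) (H : Finset (Sym2 (Fin n))) (hH : H ⊆ edgeFinset n) :
    (∀ A : Finset (Sym2 (Fin n)), A ⊂ H →
      ∃! J : Finset (Sym2 (Fin n)),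
        (A ⊂ J ∧ J ⊆ H ∧ ∀ J', A ⊂ J' → J' ⊆ H → rho J' A ≤ rho J A) ∧
        (∀ J', A ⊂ J' → J' ⊆ H → rho J A ≤ rho J' A → ¬ J ⊂ J')) ∧
    (∀ (M M' : ℕ) (J J' : ℕ → Finset (Sym2 (Fin n))),
      IsOnionDecomp n H M J → IsOnionDecomp n H M' J' →
      M = M' ∧ ∀ t, t ≤ M → J t = J' t) := by
  have part1 : ∀ A : Finset (Sym2 (Fin n)), A ⊂ H →
      ∃! J : Finset (Sym2 (Fin n)),
        (A ⊂ J ∧ J ⊆ H ∧ ∀ J', A ⊂ J' → J' ⊆ H → rho J' A ≤ rho J A) ∧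
        (∀ J', A ⊂ J' → J' ⊆ H → rho J A ≤ rho J' A → ¬ J ⊂ J') :=
    fun A hA => argmax_exists_unique hA
  refine ⟨part1, ?_⟩
  intro M M' J J' hJ hJ'
  obtain ⟨hJ0, hJM, hJstep⟩ := hJ
  obtain ⟨hJ'0, hJ'M, hJ'step⟩ := hJ'
  have key : ∀ t, t ≤ M → t ≤ M' → J t = J' t := by
    intro t
    induction t with
    | zero => intro _ _; rw [hJ0, hJ'0]
    | succ t ih =>
      intro h1 h2
      have ht1 : t < M := Nat.lt_of_succ_le h1
      have ht2 : t < M' := Nat.lt_of_succ_le h2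
      have hEq : J t = J' t := ih (le_of_lt ht1) (le_of_lt ht2)
      obtain ⟨s1, s2, s3, s4⟩ := hJstep t ht1
      obtain ⟨s1', s2', s3', s4'⟩ := hJ'step t ht2
      have hAH : J t ⊂ H := lt_of_lt_of_le s1 s2
      obtain ⟨W, _, hWuniq⟩ := part1 (J t) hAH
      have e1 : J (t + 1) = W := hWuniq _ ⟨⟨s1, s2, s3⟩, s4⟩
      have e2 : J' (t + 1) = W := by
        apply hWuniq
        rw [← hEq] at s1' s3' s4'
        exact ⟨⟨s1', s2', s3'⟩, s4'⟩
      rw [e1, e2]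
  have hMM : M = M' := by
    rcases lt_trichotomy M M' with h | h | h
    · exfalso
      obtain ⟨s1', s2', _, _⟩ := hJ'step M h
      have : J' M = H := (key M (le_refl _) (le_of_lt h)).symm.trans hJM
      rw [this] at s1'
      exact (lt_of_lt_of_le s1' s2').ne rfl
    · exact h
    · exfalso
      obtain ⟨s1, s2, _, _⟩ := hJstep M' h
      have : J M' = H := (key M' (le_of_lt h) (le_refl _)).trans hJ'M
      rw [this] at s1
      exact (lt_of_lt_of_le s1 s2).ne rfl
  exact ⟨hMM, fun t ht => key t ht (hMM ▸ ht)⟩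

end
end

section
/- For any two graphs A and B (edge sets in K_n), it holds that ρ(A ∪ B | A) ≥ ρ(B | A ∩ B). -/
open Filter
open scoped ENNReal

noncomputable section

/-- For any two graphs `A` and `B` (edge sets in `K_n`),
`ρ(A ∪ B | A) ≥ ρ(B | A ∩ B)`. -/
theorem rho_union_ge_rho_inter
    (n : ℕ) (A B : Finset (Sym2 (Fin n)))
    (hA : A ⊆ edgeFinset n) (hB : B ⊆ edgeFinset n) :
    rho B (A ∩ B) ≤ rho (A ∪ B) A := by
  classical
  have hedge : B \ (A ∩ B) = (A ∪ B) \ A := by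
    ext e; simp [Finset.mem_sdiff, Finset.mem_union, Finset.mem_inter]; tauto
  have hvsub : vertexSet (A ∪ B) \ vertexSet A ⊆ vertexSet B \ vertexSet (A ∩ B) := by
    intro v hv
    simp only [vertexSet, Finset.mem_sdiff, Finset.mem_filter, Finset.mem_univ, true_and] at hv ⊢
    obtain ⟨⟨e, he, hve⟩, hna⟩ := hv
    rcases Finset.mem_union.1 he with h | h
    · exact absurd ⟨e, h, hve⟩ hna
    · refine ⟨⟨e, h, hve⟩, ?_⟩
      rintro ⟨e', he', hve'⟩
      exact hna ⟨e', (Finset.mem_inter.1 he').1, hve'⟩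
  unfold rho
  by_cases hemp : vertexSet (A ∪ B) \ vertexSet A = ∅
  · simp [hemp]
  · have hemp2 : vertexSet B \ vertexSet (A ∩ B) ≠ ∅ := by
      intro h
      exact hemp (Finset.subset_empty.1 (h ▸ hvsub))
    rw [if_neg hemp, if_neg hemp2, hedge]
    apply ENNReal.div_le_div_left
    exact_mod_cast Nat.cast_le.2 (Finset.card_le_card hvsub)


end
end

section
/- Let k ≥ 2 be even and for integers 0 ≤ r ≤ k/2 define a_r = C(k/2, r) / ( C(k, 2r)·(2r−1)!! ), so that a_0 = 1. Then a_r = a_{r−1}/(k−2r+1) for all 1 ≤ r ≤ k/2, the sequence r ↦ a_r^{1/r} is non-decreasing on {1,…,k/2}, and consequently max_{1 ≤ r ≤ k/2} a_r^{1/r} = a_{k/2}^{2/k} = ((k−1)!!)^{−2/k}. -/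
open scoped Nat

lemma df_odd_succ (s : ℕ) : (2*s+1)‼ = (2*s+1) * (2*s-1)‼ := by
  cases s with
  | zero => rfl
  | succ n =>
    have : 2*(n+1)+1 = (2*n+1) + 2 := by ring
    rw [this, Nat.doubleFactorial]
    congr 1

lemma choose_rec_aux (s v : ℕ) :
    (s+v+1).choose (s+1) * ((2*(s+v+1)).choose (2*s)) * (2*v+1) =
    (s+v+1).choose s * ((2*(s+v+1)).choose (2*s+2)) * (2*s+1) := by
  set m := s + v + 1 with hm
  have h1 : m.choose (s+1) * (s+1) = m.choose s * (v+1) := by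
    have := Nat.choose_succ_right_eq m s
    rwa [show m - s = v + 1 by omega] at this
  have h2 : (2*m).choose (2*s+1) * (2*s+1) = (2*m).choose (2*s) * (2*v+2) := by
    have := Nat.choose_succ_right_eq (2*m) (2*s)
    rwa [show 2*m - 2*s = 2*v + 2 by omega] at this
  have h3 : (2*m).choose (2*s+2) * (2*s+2) = (2*m).choose (2*s+1) * (2*v+1) := by
    have := Nat.choose_succ_right_eq (2*m) (2*s+1)
    rwa [show 2*m - (2*s+1) = 2*v + 1 by omega] at this
  have e1 : (2*m).choose (2*s) * (2*v+2) * (2*v+1) = (2*m).choose (2*s+2) * (2*s+2) * (2*s+1) := by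
    zify at h2 h3 ⊢
    linear_combination (-(2*v+1) : ℤ) * h2 + (-(2*s+1) : ℤ) * h3
  have key : m.choose (s+1) * ((2*m).choose (2*s)) * (2*v+1) * ((s+1)*(2*v+2)) =
      m.choose s * ((2*m).choose (2*s+2)) * (2*s+1) * ((s+1)*(2*v+2)) := by
    zify at h1 e1 ⊢
    linear_combination ((2*m).choose (2*s) : ℤ) * (2*v+1) * (2*v+2) * h1
      + (m.choose s : ℤ) * (v+1) * e1
  exact Nat.eq_of_mul_eq_mul_right (by positivity) key

lemma rpow_one_div_le_rpow_one_div {x y : ℝ} (hx : 0 < x) (hy : 0 < y)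
    {r s : ℕ} (hr : 0 < r) (hs : 0 < s) (h : x ^ s ≤ y ^ r) :
    x ^ (1/(r:ℝ)) ≤ y ^ (1/(s:ℝ)) := by
  have hr' : (0:ℝ) < (r:ℝ) := by exact_mod_cast hr
  have hs' : (0:ℝ) < (s:ℝ) := by exact_mod_cast hs
  have e1 : x ^ (1/(r:ℝ)) = (x ^ s) ^ (1/((r:ℝ)*(s:ℝ))) := by
    rw [← Real.rpow_natCast x s, ← Real.rpow_mul hx.le]
    congr 1
    field_simp
  have e2 : y ^ (1/(s:ℝ)) = (y ^ r) ^ (1/((r:ℝ)*(s:ℝ))) := by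
    rw [← Real.rpow_natCast y r, ← Real.rpow_mul hy.le]
    congr 1
    field_simp
  rw [e1, e2]
  exact Real.rpow_le_rpow (by positivity) h (by positivity)

/-- Let `k ≥ 2` be even and, for `0 ≤ r ≤ k/2`, let
`a_r = C(k/2, r) / (C(k, 2r)·(2r−1)‼)` (with the convention `(−1)‼ = 1`, so `a_0 = 1`).
Then `a_r = a_{r−1}/(k−2r+1)` for all `1 ≤ r ≤ k/2`, the sequence `r ↦ a_r^(1/r)` is
non-decreasing on `{1,…,k/2}`, and consequently
`max_{1 ≤ r ≤ k/2} a_r^(1/r) = a_{k/2}^(2/k) = ((k−1)‼)^(−2/k)`. -/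
theorem matching_ratio_max
    (k : ℕ) (hk : 2 ≤ k) (hke : Even k)
    (a : ℕ → ℝ)
    (ha : ∀ r, a r =
      ((k / 2).choose r : ℝ) / ((k.choose (2 * r) : ℝ) * ((2 * r - 1)‼ : ℝ))) :
    a 0 = 1 ∧
    (∀ r, 1 ≤ r → r ≤ k / 2 → a r = a (r - 1) / ((k - 2 * r + 1 : ℕ) : ℝ)) ∧
    (∀ r s, 1 ≤ r → r ≤ s → s ≤ k / 2 →
      a r ^ (1 / (r : ℝ)) ≤ a s ^ (1 / (s : ℝ))) ∧
    (∀ r, 1 ≤ r → r ≤ k / 2 → a r ^ (1 / (r : ℝ)) ≤ a (k / 2) ^ (2 / (k : ℝ))) ∧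
    a (k / 2) ^ (2 / (k : ℝ)) = (((k - 1)‼ : ℕ) : ℝ) ^ (-(2 / (k : ℝ))) := by
  obtain ⟨m, hm⟩ := hke
  have hk2 : k = 2 * m := by omega
  have hm2 : k / 2 = m := by omega
  have hm1 : 1 ≤ m := by omega
  -- positivity of a
  have hpos : ∀ r, r ≤ m → 0 < a r := by
    intro r hr
    rw [ha r]
    have h1 : 0 < (k/2).choose r := Nat.choose_pos (by omega)
    have h2 : 0 < k.choose (2*r) := Nat.choose_pos (by omega)
    have h3 : 0 < (2*r-1)‼ := Nat.doubleFactorial_pos _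
    positivity
  -- a 0 = 1
  have ha0 : a 0 = 1 := by
    rw [ha 0]
    norm_num [Nat.doubleFactorial]
  -- the recurrence
  have hrec : ∀ r, 1 ≤ r → r ≤ m → a r = a (r - 1) / ((k - 2 * r + 1 : ℕ) : ℝ) := by
    intro r h1 h2
    obtain ⟨s, rfl⟩ : ∃ s, r = s + 1 := ⟨r - 1, by omega⟩
    obtain ⟨v, hv⟩ : ∃ v, m = s + v + 1 := ⟨m - s - 1, by omega⟩
    have hkk : k - 2 * (s+1) + 1 = 2*v + 1 := by omega
    have G := choose_rec_aux s v
    rw [← hv] at G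
    have GR : (m.choose (s+1) : ℝ) * ((2*m).choose (2*s)) * (2*v+1) =
        (m.choose s : ℝ) * ((2*m).choose (2*s+2)) * (2*s+1) := by exact_mod_cast G
    have hd1 : (0:ℝ) < ((2*m).choose (2*s) : ℝ) := by
      exact_mod_cast Nat.choose_pos (by omega)
    have hd2 : (0:ℝ) < ((2*m).choose (2*s+2) : ℝ) := by
      exact_mod_cast Nat.choose_pos (by omega)
    have hd3 : (0:ℝ) < ((2*s-1)‼ : ℝ) := by exact_mod_cast Nat.doubleFactorial_pos _
    have hd4 : (0:ℝ) < ((2*v+1 : ℕ) : ℝ) := by positivity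
    rw [show (s+1)-1 = s from rfl, ha (s+1), ha s, hkk, hm2, hk2,
      show 2*(s+1) = 2*s+2 by ring, show 2*s+2-1 = 2*s+1 by omega, df_odd_succ s]
    rw [div_div]
    rw [div_eq_div_iff (by positivity) (by positivity)]
    push_cast
    push_cast at GR
    linear_combination ((2*s-1)‼ : ℝ) * GR
  -- c is antitone (as inverses)
  have hcle : ∀ r s : ℕ, r ≤ s → s ≤ m →
      (((k - 2*r + 1 : ℕ) : ℝ))⁻¹ ≤ (((k - 2*s + 1 : ℕ) : ℝ))⁻¹ := by
    intro r s hrs hsm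
    apply inv_anti₀
    · have : 1 ≤ k - 2*s + 1 := by omega
      exact_mod_cast this
    · have : k - 2*s + 1 ≤ k - 2*r + 1 := by omega
      exact_mod_cast this
  have hcpos : ∀ r : ℕ, (0:ℝ) < (((k - 2*r + 1 : ℕ) : ℝ))⁻¹ := by
    intro r
    have : 1 ≤ k - 2*r + 1 := by omega
    have : (1:ℝ) ≤ ((k - 2*r + 1 : ℕ) : ℝ) := by exact_mod_cast this
    positivity
  -- bound : a s ≤ c s ^ s
  have hbound : ∀ s, 1 ≤ s → s ≤ m → a s ≤ ((((k - 2*s + 1 : ℕ) : ℝ))⁻¹) ^ s := by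
    intro s hs1 hsm
    induction s, hs1 using Nat.le_induction with
    | base =>
      rw [hrec 1 le_rfl (by omega), ha0, pow_one, one_div]
    | succ n hn ih =>
      have hnm : n ≤ m := by omega
      have h1 := hrec (n+1) (by omega) hsm
      rw [show n+1-1 = n by omega, div_eq_mul_inv] at h1
      calc a (n+1) = a n * (((k - 2*(n+1) + 1 : ℕ) : ℝ))⁻¹ := h1
        _ ≤ ((((k - 2*n + 1 : ℕ) : ℝ))⁻¹) ^ n * (((k - 2*(n+1) + 1 : ℕ) : ℝ))⁻¹ := by
            apply mul_le_mul_of_nonneg_right (ih hnm) (hcpos _).le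
        _ ≤ ((((k - 2*(n+1) + 1 : ℕ) : ℝ))⁻¹) ^ n * (((k - 2*(n+1) + 1 : ℕ) : ℝ))⁻¹ := by
            apply mul_le_mul_of_nonneg_right _ (hcpos _).le
            exact pow_le_pow_left₀ (hcpos _).le (hcle n (n+1) (by omega) hsm) n
        _ = ((((k - 2*(n+1) + 1 : ℕ) : ℝ))⁻¹) ^ (n+1) := by ring
  -- single monotonicity step
  have hstep : ∀ n, 1 ≤ n → n + 1 ≤ m →
      a n ^ (1/(n:ℝ)) ≤ a (n+1) ^ (1/((n+1:ℕ):ℝ)) := by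
    intro n hn1 hnm
    have hposn := hpos n (by omega)
    have hposn1 := hpos (n+1) hnm
    apply rpow_one_div_le_rpow_one_div hposn hposn1 (by omega) (by omega)
    -- a n ^ (n+1) ≤ a (n+1) ^ n
    have h1 := hrec (n+1) (by omega) hnm
    rw [show n+1-1 = n by omega, div_eq_mul_inv] at h1
    have hb : a n ≤ ((((k - 2*(n+1) + 1 : ℕ) : ℝ))⁻¹) ^ n := by
      calc a n ≤ ((((k - 2*n + 1 : ℕ) : ℝ))⁻¹) ^ n := hbound n hn1 (by omega)
        _ ≤ ((((k - 2*(n+1) + 1 : ℕ) : ℝ))⁻¹) ^ n :=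
            pow_le_pow_left₀ (hcpos _).le (hcle n (n+1) (by omega) hnm) n
    calc a n ^ (n+1) = a n ^ n * a n := by ring
      _ ≤ a n ^ n * ((((k - 2*(n+1) + 1 : ℕ) : ℝ))⁻¹) ^ n := by
          apply mul_le_mul_of_nonneg_left hb (by positivity)
      _ = (a n * (((k - 2*(n+1) + 1 : ℕ) : ℝ))⁻¹) ^ n := by ring
      _ = a (n+1) ^ n := by rw [← h1]
  -- full monotonicity
  have hmono : ∀ r s, 1 ≤ r → r ≤ s → s ≤ m →
      a r ^ (1 / (r : ℝ)) ≤ a s ^ (1 / (s : ℝ)) := by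
    intro r s hr hrs hsm
    induction s, hrs using Nat.le_induction with
    | base => exact le_rfl
    | succ n hn ih =>
      calc a r ^ (1/(r:ℝ)) ≤ a n ^ (1/(n:ℝ)) := ih (by omega)
        _ ≤ a (n+1) ^ (1/((n+1:ℕ):ℝ)) := hstep n (by omega) hsm
  -- value at the top
  have htop : a (k/2) = (((k-1)‼ : ℕ) : ℝ)⁻¹ := by
    rw [ha (k/2), hm2, show 2*m = k by omega, Nat.choose_self, Nat.choose_self]
    simp
  have hdfpos : (0:ℝ) < (((k-1)‼ : ℕ) : ℝ) := by exact_mod_cast Nat.doubleFactorial_pos _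
  have hfinal : a (k / 2) ^ (2 / (k : ℝ)) = (((k - 1)‼ : ℕ) : ℝ) ^ (-(2 / (k : ℝ))) := by
    rw [htop, Real.inv_rpow hdfpos.le, ← Real.rpow_neg hdfpos.le]
  have hexp : 2 / (k : ℝ) = 1 / ((m:ℕ) : ℝ) := by
    have hk0 : (k:ℝ) = 2 * m := by exact_mod_cast hk2
    rw [hk0]
    have : ((m:ℕ):ℝ) ≠ 0 := by positivity
    field_simp
  refine ⟨ha0, by simpa [hm2] using hrec, by simpa [hm2] using hmono, ?_, hfinal⟩
  intro r hr hrm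
  rw [hm2] at hrm ⊢
  rw [hexp]
  exact hmono r m hr hrm le_rfl
end
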